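/- arXiv:2602.14610 — 11 statements merged into one kernel-verified Lean document; each statement's English description precedes it below -/
import Mathlib

section
/- Let R be an associative ring with identity and I an ideal of R with I ⊆ J(R). Then R is a weakly √JU ring if and only if R/I is a weakly √JU ring. -/
/-- `√J(R)`: elements with some power in the Jacobson radical. -/
def sqrtJ (R : Type*) [Ring R] : Set R :=
  {x | ∃ n : ℕ, 1 ≤ n ∧ x ^ n ∈ Ideal.jacobson (⊥ : Ideal R)}

/-- `R` is a weakly `√JU` ring: every unit is `1 + j` or `-1 + j` with `j ∈ √J(R)`. -/
def IsWSqrtJU (R : Type*) [Ring R] : Prop :=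
  ∀ u : Rˣ, ∃ j ∈ sqrtJ R, (u : R) = 1 + j ∨ (u : R) = -1 + j

/-- `R` is a `√JU` ring: every unit is `1 + j` with `j ∈ √J(R)`. -/
def IsSqrtJU (R : Type*) [Ring R] : Prop :=
  ∀ u : Rˣ, ∃ j ∈ sqrtJ R, (u : R) = 1 + j

/-- `R` is a weakly `UU` ring: every unit is `±1` plus a nilpotent. -/
def IsWUU (R : Type*) [Ring R] : Prop :=
  ∀ u : Rˣ, ∃ q : R, IsNilpotent q ∧ ((u : R) = 1 + q ∨ (u : R) = -1 + q)


section aux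

variable {R : Type*} {S : Type*} [Ring R] [Ring S]

lemma jac_map (f : R →+* S) (hf : Function.Surjective f) {x : R}
    (hx : x ∈ Ideal.jacobson (⊥ : Ideal R)) : f x ∈ Ideal.jacobson (⊥ : Ideal S) := by
  have h1 : x ∈ (Ideal.comap f (⊥ : Ideal S)).jacobson :=
    Ideal.jacobson_mono bot_le hx
  rwa [← Ideal.comap_jacobson_of_surjective hf, Ideal.mem_comap] at h1

lemma jac_comap (f : R →+* S) (hf : Function.Surjective f)
    (hker : ∀ x : R, f x = 0 → x ∈ Ideal.jacobson (⊥ : Ideal R)) {x : R}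
    (hx : f x ∈ Ideal.jacobson (⊥ : Ideal S)) : x ∈ Ideal.jacobson (⊥ : Ideal R) := by
  have h1 : x ∈ Ideal.comap f ((⊥ : Ideal S).jacobson) := hx
  rw [Ideal.comap_jacobson_of_surjective hf] at h1
  have h2 : Ideal.comap f (⊥ : Ideal S) ≤ Ideal.jacobson (⊥ : Ideal R) := by
    intro y hy
    exact hker y (by simpa using hy)
  have := Ideal.jacobson_mono h2 h1
  rwa [Ideal.jacobson_idem] at this

lemma isUnit_one_add_jac {j : R} (hj : j ∈ Ideal.jacobson (⊥ : Ideal R)) :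
    IsUnit (1 + j) := by
  obtain ⟨s, hs⟩ := Ideal.exists_mul_add_sub_mem_of_mem_jacobson j hj
  rw [Ideal.mem_bot, sub_eq_zero] at hs
  -- hs : s * (j + 1) = 1
  have hs1 : s - 1 ∈ Ideal.jacobson (⊥ : Ideal R) := by
    have h2 : s * j + s = 1 := by rw [mul_add, mul_one] at hs; exact hs
    have : s - 1 = -(s * j) := by
      have := h2
      rw [← this]; abel
    rw [this]
    exact neg_mem (Ideal.mul_mem_left _ s hj)
  obtain ⟨t, ht⟩ := Ideal.exists_mul_add_sub_mem_of_mem_jacobson (s - 1) hs1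
  rw [Ideal.mem_bot, sub_eq_zero, sub_add_cancel] at ht
  -- ht : t * s = 1
  have hts : t = j + 1 := by
    calc t = t * (s * (j + 1)) := by rw [hs, mul_one]
    _ = (t * s) * (j + 1) := by rw [mul_assoc]
    _ = j + 1 := by rw [ht, one_mul]
  rw [add_comm]
  exact isUnit_iff_exists.mpr ⟨s, by rw [← hts, ht], hs⟩

lemma isUnit_lift (f : R →+* S) (hf : Function.Surjective f)
    (hker : ∀ x : R, f x = 0 → x ∈ Ideal.jacobson (⊥ : Ideal R)) {a : R}
    (ha : IsUnit (f a)) : IsUnit a := by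
  obtain ⟨v, hv⟩ := ha
  obtain ⟨b, hb⟩ := hf (↑v⁻¹ : S)
  have hba : b * a - 1 ∈ Ideal.jacobson (⊥ : Ideal R) := by
    apply hker
    simp [map_sub, map_mul, hb, ← hv]
  have hab : a * b - 1 ∈ Ideal.jacobson (⊥ : Ideal R) := by
    apply hker
    simp [map_sub, map_mul, hb, ← hv]
  have hba' : IsUnit (b * a) := by
    have := isUnit_one_add_jac hba
    simpa using this
  have hab' : IsUnit (a * b) := by
    have := isUnit_one_add_jac hab
    simpa using this
  obtain ⟨w, hw⟩ := hba'
  obtain ⟨z, hz⟩ := hab'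
  have hleft : ((↑w⁻¹ : R) * b) * a = 1 := by
    rw [mul_assoc, ← hw, ← Units.val_mul, inv_mul_cancel, Units.val_one]
  have hright : a * (b * (↑z⁻¹ : R)) = 1 := by
    rw [← mul_assoc, ← hz, ← Units.val_mul, mul_inv_cancel, Units.val_one]
  have heq : (↑w⁻¹ : R) * b = b * (↑z⁻¹ : R) := by
    calc (↑w⁻¹ : R) * b = ((↑w⁻¹ : R) * b) * (a * (b * (↑z⁻¹ : R))) := by rw [hright, mul_one]
    _ = (((↑w⁻¹ : R) * b) * a) * (b * (↑z⁻¹ : R)) := by rw [← mul_assoc]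
    _ = b * (↑z⁻¹ : R) := by rw [hleft, one_mul]
  exact isUnit_iff_exists.mpr ⟨(↑w⁻¹ : R) * b, by rw [heq]; exact hright, hleft⟩

end aux

theorem stmt8 {R : Type*} [Ring R] (I : TwoSidedIdeal R)
    (hI : ∀ x ∈ I, x ∈ Ideal.jacobson (⊥ : Ideal R)) :
    IsWSqrtJU R ↔ IsWSqrtJU I.ringCon.Quotient := by
  set f : R →+* I.ringCon.Quotient := I.ringCon.mk' with hf_def
  have hf : Function.Surjective f := fun x => Quotient.inductionOn' x fun a => ⟨a, rfl⟩
  have hker : ∀ x : R, f x = 0 → x ∈ Ideal.jacobson (⊥ : Ideal R) := by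
    intro x hx
    apply hI
    rw [← TwoSidedIdeal.ker_ringCon_mk' I]
    exact (TwoSidedIdeal.mem_ker _).mpr hx
  constructor
  · intro h v
    obtain ⟨a, ha⟩ := hf (v : I.ringCon.Quotient)
    have hau : IsUnit a := isUnit_lift f hf hker (by rw [ha]; exact v.isUnit)
    obtain ⟨u, hu⟩ := hau
    obtain ⟨j, ⟨n, hn, hjn⟩, hcase⟩ := h u
    refine ⟨f j, ⟨n, hn, ?_⟩, ?_⟩
    · rw [← map_pow]; exact jac_map f hf hjn
    · rcases hcase with h1 | h1
      · left; rw [← ha, ← hu, h1, map_add, map_one]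
      · right; rw [← ha, ← hu, h1, map_add, map_neg, map_one]
  · intro h u
    obtain ⟨v, hv'⟩ := (u.isUnit).map f
    obtain ⟨j', ⟨n, hn, hjn⟩, hcase⟩ := h v
    rcases hcase with h1 | h1
    · refine ⟨(u : R) - 1, ⟨n, hn, ?_⟩, Or.inl (by abel)⟩
      apply jac_comap f hf hker
      rw [map_pow, map_sub, map_one]
      have : f (u : R) = (v : I.ringCon.Quotient) := hv'.symm
      rw [this, h1]
      have h2 : (1 : I.ringCon.Quotient) + j' - 1 = j' := by abel
      rwa [h2]
    · refine ⟨(u : R) + 1, ⟨n, hn, ?_⟩, Or.inr (by abel)⟩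
      apply jac_comap f hf hker
      rw [map_pow, map_add, map_one]
      have : f (u : R) = (v : I.ringCon.Quotient) := hv'.symm
      rw [this, h1]
      have h2 : (-1 : I.ringCon.Quotient) + j' + 1 = j' := by abel
      rwa [h2]
end

section
/- Let R be a weakly √JU ring and S a √JU ring. Then the product ring R × S is a weakly √JU ring. -/
private lemma mem_jac_prod {R S : Type*} [Ring R] [Ring S] {a : R} {b : S}
    (ha : a ∈ Ideal.jacobson (⊥ : Ideal R)) (hb : b ∈ Ideal.jacobson (⊥ : Ideal S)) :
    (a, b) ∈ Ideal.jacobson (⊥ : Ideal (R × S)) := by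
  rw [Ideal.mem_jacobson_iff] at ha hb ⊢
  rintro ⟨y1, y2⟩
  obtain ⟨z1, hz1⟩ := ha y1
  obtain ⟨z2, hz2⟩ := hb y2
  rw [Ideal.mem_bot] at hz1 hz2
  exact ⟨(z1, z2), by rw [Ideal.mem_bot]; exact Prod.ext hz1 hz2⟩

private lemma pow_mem_aux {R : Type*} [Ring R] {I : Ideal R} {a : R} (h : a ∈ I)
    {n : ℕ} (hn : 1 ≤ n) : a ^ n ∈ I := by
  obtain ⟨k, rfl⟩ : ∃ k, n = k + 1 := ⟨n - 1, by omega⟩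
  rw [pow_succ]
  exact I.mul_mem_left _ h

set_option maxHeartbeats 1000000 in
private lemma sqrtJ_prod {R S : Type*} [Ring R] [Ring S] {a : R} {b : S}
    (ha : a ∈ sqrtJ R) (hb : b ∈ sqrtJ S) : (a, b) ∈ sqrtJ (R × S) := by
  obtain ⟨m, hm1, hm⟩ := ha
  obtain ⟨n, hn1, hn⟩ := hb
  refine ⟨m * n, Nat.one_le_iff_ne_zero.2 (Nat.mul_ne_zero (by omega) (by omega)), ?_⟩
  have key : ((a, b) : R × S) ^ (m * n) = ((a ^ m) ^ n, (b ^ n) ^ m) := by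
    have : ((a, b) : R × S) ^ (m * n) = (a ^ (m * n), b ^ (m * n)) := Prod.pow_mk _ _ _
    rw [this]
    congr 1
    · rw [pow_mul]
    · rw [mul_comm m n, pow_mul]
  rw [key]
  exact mem_jac_prod (pow_mem_aux hm hn1) (pow_mem_aux hn hm1)

private lemma sqrtJ_neg {R : Type*} [Ring R] {a : R} (ha : a ∈ sqrtJ R) : -a ∈ sqrtJ R := by
  obtain ⟨n, hn1, hn⟩ := ha
  refine ⟨2 * n, by omega, ?_⟩
  have : (-a) ^ (2 * n) = (a ^ n) * (a ^ n) := by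
    rw [Even.neg_pow ⟨n, by ring⟩, two_mul, pow_add]
  rw [this]
  exact Ideal.mul_mem_left _ _ hn

theorem stmt9 {R S : Type*} [Ring R] [Ring S]
    (hR : IsWSqrtJU R) (hS : IsSqrtJU S) : IsWSqrtJU (R × S) := by
  intro u
  set u1 : Rˣ := Units.map (RingHom.fst R S).toMonoidHom u with hu1
  set u2 : Sˣ := Units.map (RingHom.snd R S).toMonoidHom u with hu2
  have hc1 : (u : R × S).1 = (u1 : R) := rfl
  have hc2 : (u : R × S).2 = (u2 : S) := rfl
  obtain ⟨j1, hj1, hcase⟩ := hR u1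
  rcases hcase with h1 | h1
  · obtain ⟨j2, hj2, h2⟩ := hS u2
    refine ⟨(j1, j2), sqrtJ_prod hj1 hj2, Or.inl ?_⟩
    ext
    · simpa [hc1] using h1
    · simpa [hc2] using h2
  · obtain ⟨j2, hj2, h2⟩ := hS (-u2)
    refine ⟨(j1, -j2), sqrtJ_prod hj1 (sqrtJ_neg hj2), Or.inr ?_⟩
    have h2' : (u2 : S) = -1 + -j2 := by
      have hneg : (-(u2 : S)) = 1 + j2 := h2
      have := congrArg Neg.neg hneg
      rwa [neg_neg, neg_add] at this
    ext
    · simpa [hc1] using h1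
    · simpa [hc2] using h2'
end

section
/- For any nonzero associative ring R with identity, the 2×2 matrix ring M₂(R) is not a weakly √JU ring; specifically, the matrix A = [[0,1],[1,1]] is such that both A + I and A - I are units of M₂(R), hence neither lies in √J(M₂(R)). -/
section Aux
variable {R : Type*} [Ring R]

lemma aux_A1 : (!![0, 1; 1, 1] : Matrix (Fin 2) (Fin 2) R) + 1 = !![1, 1; 1, 2] := by
  rw [Matrix.one_fin_two]
  norm_num [Matrix.etaExpand_eq]

lemma aux_A2 : (!![0, 1; 1, 1] : Matrix (Fin 2) (Fin 2) R) - 1 = !![-1, 1; 1, 0] := by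
  rw [Matrix.one_fin_two]
  ext i j; fin_cases i <;> fin_cases j <;> simp

lemma aux_u1 : IsUnit ((!![0, 1; 1, 1] : Matrix (Fin 2) (Fin 2) R) + 1) := by
  rw [aux_A1]
  exact ⟨⟨_, !![2, -1; -1, 1], by
    norm_num [Matrix.mul_fin_two, Matrix.one_fin_two]; exact Matrix.one_fin_two.symm, by
    norm_num [Matrix.mul_fin_two, Matrix.one_fin_two]; exact Matrix.one_fin_two.symm⟩, rfl⟩

lemma aux_u2 : IsUnit ((!![0, 1; 1, 1] : Matrix (Fin 2) (Fin 2) R) - 1) := by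
  rw [aux_A2]
  exact ⟨⟨_, !![0, 1; 1, 1], by
    norm_num [Matrix.mul_fin_two, Matrix.one_fin_two]; exact Matrix.one_fin_two.symm, by
    norm_num [Matrix.mul_fin_two, Matrix.one_fin_two]; exact Matrix.one_fin_two.symm⟩, rfl⟩

lemma aux_uA : IsUnit ((!![0, 1; 1, 1] : Matrix (Fin 2) (Fin 2) R)) := by
  exact ⟨⟨_, !![-1, 1; 1, 0], by
    norm_num [Matrix.mul_fin_two, Matrix.one_fin_two]; exact Matrix.one_fin_two.symm, by
    norm_num [Matrix.mul_fin_two, Matrix.one_fin_two]; exact Matrix.one_fin_two.symm⟩, rfl⟩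

lemma aux_not_unit_sqrtJ {S : Type*} [Ring S] [Nontrivial S] {x : S}
    (hx : x ∈ sqrtJ S) : ¬ IsUnit x := by
  rintro hu
  obtain ⟨n, hn, hmem⟩ := hx
  obtain ⟨M, hM⟩ := Ideal.exists_maximal S
  have hle : Ideal.jacobson (⊥ : Ideal S) ≤ M :=
    sInf_le ⟨bot_le, hM⟩
  exact hM.ne_top (M.eq_top_of_isUnit_mem (hle hmem) (hu.pow n))

end Aux

theorem stmt10 {R : Type*} [Ring R] [Nontrivial R] :
    IsUnit ((!![0, 1; 1, 1] : Matrix (Fin 2) (Fin 2) R) + 1) ∧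
    IsUnit ((!![0, 1; 1, 1] : Matrix (Fin 2) (Fin 2) R) - 1) ∧
    ¬ IsWSqrtJU (Matrix (Fin 2) (Fin 2) R) := by
  refine ⟨aux_u1, aux_u2, fun h => ?_⟩
  obtain ⟨j, hj, hcase⟩ := h aux_uA.unit
  rcases hcase with hc | hc <;> apply aux_not_unit_sqrtJ hj
  · have : j = (!![0, 1; 1, 1] : Matrix (Fin 2) (Fin 2) R) - 1 := by
      rw [IsUnit.unit_spec] at hc; rw [hc]; abel
    rw [this]; exact aux_u2
  · have : j = (!![0, 1; 1, 1] : Matrix (Fin 2) (Fin 2) R) + 1 := by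
      rw [IsUnit.unit_spec] at hc; rw [hc]; abel
    rw [this]; exact aux_u1
end

section
/- Let R be a weakly √JU ring. Then 3 ∈ U(R) if and only if 2 ∈ J(R). -/
/-- In any (possibly noncommutative) ring, `1 + x` has a left inverse
when `x` is in the Jacobson radical. -/
lemma left_inv_of_mem_jacobson {R : Type*} [Ring R] {x : R}
    (hx : x ∈ Ideal.jacobson (⊥ : Ideal R)) : ∃ z : R, z * (1 + x) = 1 := by
  obtain ⟨z, hz⟩ := Ideal.mem_jacobson_iff.1 hx 1
  rw [Ideal.mem_bot, sub_eq_zero, mul_one] at hz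
  exact ⟨z, by rw [mul_add, mul_one, add_comm, hz]⟩

/-- In any (possibly noncommutative) ring, `1 + x` is a unit when `x` is in
the Jacobson radical. -/
lemma isUnit_one_add_of_mem_jacobson {R : Type*} [Ring R] {x : R}
    (hx : x ∈ Ideal.jacobson (⊥ : Ideal R)) : IsUnit (1 + x) := by
  obtain ⟨z, hz⟩ := left_inv_of_mem_jacobson hx
  -- z = 1 + (-(z*x)), and -(z*x) is also in the radical
  have hz' : z = 1 + (-(z * x)) := by
    have h1 : z + z * x = 1 := by rw [← hz]; noncomm_ring
    have h2 := eq_sub_of_add_eq h1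
    rw [sub_eq_add_neg] at h2
    exact h2
  have hmem : -(z * x) ∈ Ideal.jacobson (⊥ : Ideal R) :=
    neg_mem (Ideal.mul_mem_left _ z hx)
  obtain ⟨w, hw⟩ := left_inv_of_mem_jacobson hmem
  rw [← hz'] at hw
  -- w * z = 1 and z * (1+x) = 1, so w = 1+x and z is a two-sided inverse
  have hw' : w = 1 + x := by
    calc w = w * (z * (1 + x)) := by rw [hz, mul_one]
    _ = (w * z) * (1 + x) := by rw [mul_assoc]
    _ = 1 + x := by rw [hw, one_mul]
  have hright : (1 + x) * z = 1 := by rw [← hw', hw]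
  exact ⟨⟨1 + x, z, hright, hz⟩, rfl⟩

/-- A central element with some power in the Jacobson radical lies in the
Jacobson radical. -/
lemma central_mem_jacobson_of_pow {R : Type*} [Ring R] {c : R}
    (hc : ∀ a : R, c * a = a * c) {n : ℕ}
    (h : c ^ n ∈ Ideal.jacobson (⊥ : Ideal R)) :
    c ∈ Ideal.jacobson (⊥ : Ideal R) := by
  rw [Ideal.jacobson, Ideal.mem_sInf]
  intro M hM
  have hMmax : M.IsMaximal := hM.2
  by_contra hcM
  have hpow : c ^ n ∈ M := by
    rw [Ideal.jacobson, Ideal.mem_sInf] at h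
    exact h hM
  -- M ⊔ span {c} = ⊤ since M is maximal and c ∉ M
  have htop : M ⊔ Ideal.span {c} = ⊤ := by
    apply hMmax.1.2
    refine lt_of_le_of_ne le_sup_left fun he => hcM ?_
    rw [he]
    exact Submodule.mem_sup_right (Ideal.subset_span rfl)
  have h1 : (1 : R) ∈ M ⊔ Ideal.span {c} := htop ▸ Submodule.mem_top
  obtain ⟨m, hm, y, hy, hmy⟩ := Submodule.mem_sup.1 h1
  obtain ⟨r, hr⟩ := Submodule.mem_span_singleton.1 hy
  rw [smul_eq_mul] at hr
  subst hr
  -- descent: c ^ k ∈ M → False, by induction on k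
  have key : ∀ k : ℕ, c ^ k ∈ M → False := by
    intro k
    induction k with
    | zero =>
      intro h0
      rw [pow_zero] at h0
      exact hMmax.1.1 ((Ideal.eq_top_iff_one M).2 h0)
    | succ k ih =>
      intro hk1
      apply ih
      have : c ^ k = m * c ^ k + r * c ^ (k + 1) := by
        calc c ^ k = (m + r * c) * c ^ k := by rw [hmy, one_mul]
        _ = m * c ^ k + r * (c * c ^ k) := by rw [add_mul, mul_assoc]
        _ = m * c ^ k + r * c ^ (k + 1) := by rw [hc, ← pow_succ]
      rw [this]
      have hcomm : m * c ^ k = c ^ k * m :=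
        ((show Commute c m from hc m).pow_left k).eq.symm
      rw [hcomm]
      exact add_mem (Ideal.mul_mem_left M _ hm) (Ideal.mul_mem_left M _ hk1)
  exact key n hpow

theorem stmt11 {R : Type*} [Ring R] (h : IsWSqrtJU R) :
    IsUnit (3 : R) ↔ (2 : R) ∈ Ideal.jacobson (⊥ : Ideal R) := by
  have h2c : ∀ a : R, (2 : R) * a = a * (2 : R) := by
    intro a; rw [two_mul, mul_two]
  constructor
  · intro h3
    obtain ⟨j, ⟨n, hn1, hnJ⟩, hj⟩ := h h3.unit
    rw [IsUnit.unit_spec] at hj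
    rcases hj with hj | hj
    · have hj2 : j = 2 := by
        have h' := hj
        rw [show (3 : R) = 1 + 2 by norm_num] at h'
        exact (add_left_cancel h').symm
      subst hj2
      exact central_mem_jacobson_of_pow h2c hnJ
    · have hj4 : j = 2 ^ 2 := by
        have h' := hj
        rw [show (3 : R) = -1 + 2 ^ 2 by norm_num] at h'
        exact (add_left_cancel h').symm
      subst hj4
      rw [← pow_mul] at hnJ
      exact central_mem_jacobson_of_pow h2c hnJ
  · intro h2
    have := isUnit_one_add_of_mem_jacobson h2
    rwa [show (1 : R) + 2 = 3 by norm_num] at this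
end

section
/- Let R be a weakly √JU ring. Then 2 ∈ U(R) if and only if 3 ∈ J(R). -/
/-- Noncommutative version of `Ideal.mem_jacobson_bot`. -/
lemma mem_jacobson_bot' {R : Type*} [Ring R] {x : R} :
    x ∈ Ideal.jacobson (⊥ : Ideal R) ↔ ∀ y : R, IsUnit (y * x + 1) := by
  constructor
  · intro hx y
    obtain ⟨z, hz⟩ := Ideal.mem_jacobson_iff.mp hx y
    rw [Ideal.mem_bot, sub_eq_zero] at hz
    have hz1 : z * (y * x + 1) = 1 := by rw [mul_add, mul_one, ← mul_assoc, hz]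
    obtain ⟨w, hw⟩ := Ideal.mem_jacobson_iff.mp hx (-(z * y))
    rw [Ideal.mem_bot, sub_eq_zero] at hw
    -- hw : w * -(z*y) * x + w = 1, i.e. w * z = 1 since z = 1 - z*y*x
    have hzval : z = -(z * y) * x + 1 := by
      have : z * y * x + z = 1 := hz
      calc z = (z * y * x + z) - z * y * x := by noncomm_ring
      _ = 1 - z * y * x := by rw [this]
      _ = -(z * y) * x + 1 := by noncomm_ring
    have hwz : w * z = 1 := by
      rw [hzval, mul_add, mul_one, ← mul_assoc, hw]
    -- so z has left inverse w and right inverse (y*x+1); hence y*x+1 = w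
    have hyw : y * x + 1 = w := by
      calc y * x + 1 = 1 * (y * x + 1) := by rw [one_mul]
      _ = (w * z) * (y * x + 1) := by rw [hwz]
      _ = w * (z * (y * x + 1)) := by rw [mul_assoc]
      _ = w := by rw [hz1, mul_one]
    refine isUnit_iff_exists.mpr ⟨z, ?_, hz1⟩
    rw [hyw, hwz]
  · intro h
    rw [Ideal.mem_jacobson_iff]
    intro y
    obtain ⟨v, hv⟩ := h y
    refine ⟨(↑v⁻¹ : R), ?_⟩
    rw [Ideal.mem_bot, sub_eq_zero]
    calc (↑v⁻¹ : R) * y * x + ↑v⁻¹ = ↑v⁻¹ * (y * x + 1) := by noncomm_ring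
    _ = ↑v⁻¹ * ↑v := by rw [hv]
    _ = 1 := v.inv_mul

lemma central_pow_mem_jacobson_aux {R : Type*} [Ring R] {x : R}
    (hc : ∀ y : R, Commute x y) {n : ℕ} (hn : 1 ≤ n)
    (h : x ^ n ∈ Ideal.jacobson (⊥ : Ideal R)) :
    x ∈ Ideal.jacobson (⊥ : Ideal R) := by
  rw [mem_jacobson_bot'] at h ⊢
  intro y
  set s : R := -(x * y) with hs
  have hsn : s ^ n = (-1 : R) ^ n * (x ^ n * y ^ n) := by
    rw [hs, neg_pow, (hc y).mul_pow]
  have hcp : ∀ m : ℕ, x ^ m * y ^ m = y ^ m * x ^ m := fun m =>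
    ((hc y).pow_pow m m).eq
  have hun : IsUnit (1 - s ^ n) := by
    rcases Nat.even_or_odd n with he | ho
    · have hseq : s ^ n = y ^ n * x ^ n := by
        rw [hsn, he.neg_one_pow, one_mul, hcp]
      rw [hseq]
      have := h (-(y ^ n))
      rwa [neg_mul, neg_add_eq_sub] at this
    · have hseq : s ^ n = -(y ^ n * x ^ n) := by
        rw [hsn, ho.neg_one_pow, neg_one_mul, hcp]
      rw [hseq, sub_neg_eq_add, add_comm]
      exact h (y ^ n)
  set g : R := ∑ i ∈ Finset.range n, s ^ i with hg
  have h1 : (1 - s) * g = 1 - s ^ n := by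
    have hgs := mul_geom_sum s n
    calc (1 - s) * g = -((s - 1) * g) := by noncomm_ring
    _ = -(s ^ n - 1) := by rw [hgs]
    _ = 1 - s ^ n := by noncomm_ring
  have h2 : g * (1 - s) = 1 - s ^ n := by
    have hgs := geom_sum_mul s n
    calc g * (1 - s) = -(g * (s - 1)) := by noncomm_ring
    _ = -(s ^ n - 1) := by rw [hgs]
    _ = 1 - s ^ n := by noncomm_ring
  obtain ⟨v, hv⟩ := hun
  have hcomm : Commute g (v : R) := by
    rw [hv]
    refine Commute.sub_right (Commute.one_right g) ?_
    exact Commute.sum_left _ _ _ (fun i _ => (Commute.refl s).pow_pow i n)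
  have hcomm' : Commute g ((v⁻¹ : Rˣ) : R) := hcomm.units_inv_right
  have key : IsUnit (1 - s) := by
    refine isUnit_iff_exists.mpr ⟨g * ((v⁻¹ : Rˣ) : R), ?_, ?_⟩
    · rw [← mul_assoc, h1, ← hv, ← Units.val_mul, mul_inv_cancel, Units.val_one]
    · rw [hcomm'.eq, mul_assoc, h2, ← hv, ← Units.val_mul, inv_mul_cancel, Units.val_one]
  have heq : 1 - s = y * x + 1 := by rw [hs, sub_neg_eq_add, add_comm, (hc y).eq]
  rwa [heq] at key

theorem stmt12' {R : Type*} [Ring R] (h : ∀ u : Rˣ, ∃ j ∈ {x : R | ∃ n : ℕ, 1 ≤ n ∧ x ^ n ∈ Ideal.jacobson (⊥ : Ideal R)}, (u : R) = 1 + j ∨ (u : R) = -1 + j) :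
    IsUnit (2 : R) ↔ (3 : R) ∈ Ideal.jacobson (⊥ : Ideal R) := by
  constructor
  · intro h2
    obtain ⟨u, hu⟩ := h2
    obtain ⟨j, ⟨n, hn, hj⟩, hc1 | hc2⟩ := h u
    · -- 2 = 1 + j, so j = 1, so 1 ∈ jacobson ⊥, so R is trivial
      have hj1 : j = 1 := by
        have : (1 : R) + 1 = 1 + j := by rw [← hc1, hu]; norm_num
        exact (add_left_cancel this).symm
      rw [hj1, one_pow] at hj
      have h0 : IsUnit (0 : R) := by
        have := mem_jacobson_bot'.mp hj (-1)
        rwa [neg_one_mul, neg_add_cancel] at this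
      have h01 : (0 : R) = 1 := isUnit_zero_iff.mp h0
      have h30 : (3 : R) = 0 := by
        calc (3 : R) = 3 * 1 := by rw [mul_one]
        _ = 3 * 0 := by rw [h01]
        _ = 0 := by rw [mul_zero]
      rw [h30]
      exact (Ideal.jacobson ⊥).zero_mem
    · -- 2 = -1 + j, so j = 3
      have hj3 : j = 3 := by
        have he : (-1 : R) + j = 2 := by rw [← hc2, hu]
        calc j = 1 + (-1 + j) := by rw [← add_assoc]; norm_num
        _ = 1 + 2 := by rw [he]
        _ = 3 := by norm_num
      rw [hj3] at hj
      have hcomm : ∀ y : R, Commute (3 : R) y := fun y => by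
        have : ((3 : ℕ) : R) = (3 : R) := by norm_cast
        exact this ▸ (Nat.cast_commute 3 y)
      exact central_pow_mem_jacobson_aux hcomm hn hj
  · intro h3
    have := mem_jacobson_bot'.mp h3 (-1)
    have he : (-1 : R) * 3 + 1 = -2 := by norm_num
    rw [he] at this
    rw [← neg_neg (2 : R)]
    exact this.neg

theorem stmt12 {R : Type*} [Ring R] (h : IsWSqrtJU R) :
    IsUnit (2 : R) ↔ (3 : R) ∈ Ideal.jacobson (⊥ : Ideal R) := by
  exact stmt12' h
end

section
/- Let R be a weakly √JU ring with 3 ∈ J(R) and with 2 ∈ U(R). Then R has only trivial idempotents: Id(R) = {0, 1}. -/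
/-- An idempotent in the Jacobson radical is zero. -/
lemma idem_mem_jacobson_eq_zero {R : Type*} [Ring R] {e : R}
    (he : IsIdempotentElem e) (hm : e ∈ Ideal.jacobson (⊥ : Ideal R)) : e = 0 := by
  obtain ⟨z, hz⟩ := (Ideal.mem_jacobson_iff.mp hm) (-1)
  rw [Ideal.mem_bot, sub_eq_zero] at hz
  -- hz : z * (-1) * e + z = 1, i.e. z * (1 - e) = 1
  have h1 : z * (1 - e) = 1 := by
    calc z * (1 - e) = z * -1 * e + z := by noncomm_ring
      _ = 1 := hz
  have h2 : (1 - e) * e = 0 := by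
    rw [sub_mul, one_mul, he.eq, sub_self]
  calc e = 1 * e := (one_mul e).symm
    _ = z * (1 - e) * e := by rw [h1]
    _ = z * ((1 - e) * e) := by rw [mul_assoc]
    _ = 0 := by rw [h2, mul_zero]

theorem stmt13 {R : Type*} [Ring R] (h : IsWSqrtJU R)
    (h3 : (3 : R) ∈ Ideal.jacobson (⊥ : Ideal R)) (h2 : IsUnit (2 : R)) :
    ∀ e : R, IsIdempotentElem e → e = 0 ∨ e = 1 := by
  intro e he
  have hsq : (2 * e - 1) * (2 * e - 1) = 1 := by
    have h4 : (2 * e - 1) * (2 * e - 1) = 4 * (e * e) - 4 * e + 1 := by noncomm_ring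
    rw [h4, he.eq]
    noncomm_ring
  let u : Rˣ := ⟨2 * e - 1, 2 * e - 1, hsq, hsq⟩
  obtain ⟨j, ⟨n, hn, hj⟩, hcase⟩ := h u
  obtain ⟨m, rfl⟩ := Nat.exists_eq_add_of_le hn
  have hju : (u : R) = 2 * e - 1 := rfl
  rcases hcase with hc | hc
  · -- 2e - 1 = 1 + j, so j = -2 * (1 - e), hence 1 - e ∈ J, e = 1
    right
    rw [hju] at hc
    have hjval : j = (-2) * (1 - e) := by
      have h' : j = (2 * e - 1) - 1 := by rw [hc]; abel
      rw [h']; noncomm_ring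
      simp
    have hcomm2 : Commute (2 : R) (1 - e) := by
      rw [Commute, SemiconjBy, two_mul, mul_two]
    have hcomm : Commute (-2 : R) (1 - e) := hcomm2.neg_left
    have hf : IsIdempotentElem (1 - e) := he.one_sub
    have hpow : j ^ (1 + m) = (-2 : R) ^ (1 + m) * (1 - e) := by
      rw [hjval, hcomm.mul_pow, Nat.add_comm 1 m, hf.pow_succ_eq]
    obtain ⟨v, hv⟩ := (h2.neg).pow (n := 1 + m)
    have hmem : (1 - e) ∈ Ideal.jacobson (⊥ : Ideal R) := by
      have hmul : ((v⁻¹ : Rˣ) : R) * j ^ (1 + m) ∈ Ideal.jacobson (⊥ : Ideal R) :=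
        Ideal.mul_mem_left _ _ hj
      rwa [hpow, ← hv, ← mul_assoc, Units.inv_mul, one_mul] at hmul
    have hz := idem_mem_jacobson_eq_zero hf hmem
    rw [sub_eq_zero] at hz
    exact hz.symm
  · -- 2e - 1 = -1 + j, so j = 2e, hence e ∈ J, e = 0
    left
    rw [hju] at hc
    have hjval : j = (2 : R) * e := by
      have h' : j = (2 * e - 1) + 1 := by rw [hc]; abel
      rw [h']; noncomm_ring
    have hcomm : Commute (2 : R) e := by
      rw [Commute, SemiconjBy, two_mul, mul_two]
    have hpow : j ^ (1 + m) = (2 : R) ^ (1 + m) * e := by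
      rw [hjval, hcomm.mul_pow, Nat.add_comm 1 m, he.pow_succ_eq]
    obtain ⟨v, hv⟩ := h2.pow (n := 1 + m)
    have hmem : e ∈ Ideal.jacobson (⊥ : Ideal R) := by
      have hmul : ((v⁻¹ : Rˣ) : R) * j ^ (1 + m) ∈ Ideal.jacobson (⊥ : Ideal R) :=
        Ideal.mul_mem_left _ _ hj
      rwa [hpow, ← hv, ← mul_assoc, Units.inv_mul, one_mul] at hmul
    exact idem_mem_jacobson_eq_zero he hmem
end

section
/- An associative ring R with identity is a √JU ring if and only if R is a weakly √JU ring and 2 ∈ J(R). -/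
private lemma isUnit_of_sub_one_mem_jac {R : Type*} [Ring R] (r : R)
    (h : r - 1 ∈ Ideal.jacobson (⊥ : Ideal R)) : IsUnit r := by
  obtain ⟨s, hs⟩ := Ideal.exists_mul_sub_mem_of_sub_one_mem_jacobson r h
  rw [Ideal.mem_bot, sub_eq_zero] at hs
  have hs1 : s - 1 ∈ Ideal.jacobson (⊥ : Ideal R) := by
    have heq : s - 1 = -(s * (r - 1)) := by
      have : s * (r - 1) = s * r - s := by noncomm_ring
      rw [this, hs]; noncomm_ring
    rw [heq]
    exact Submodule.neg_mem _ (Ideal.mul_mem_left _ _ h)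
  obtain ⟨t, ht⟩ := Ideal.exists_mul_sub_mem_of_sub_one_mem_jacobson s hs1
  rw [Ideal.mem_bot, sub_eq_zero] at ht
  have htr : t = r := by
    calc t = t * (s * r) := by rw [hs, mul_one]
    _ = (t * s) * r := by rw [mul_assoc]
    _ = r := by rw [ht, one_mul]
  exact ⟨⟨r, s, by rw [← htr]; exact ht, hs⟩, rfl⟩

private lemma isUnit_one_sub_of_pow_mem {R : Type*} [Ring R] {x : R} {n : ℕ}
    (hn : 1 ≤ n) (hx : x ^ n ∈ Ideal.jacobson (⊥ : Ideal R)) : IsUnit (1 - x) := by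
  have hu : IsUnit (1 - x ^ n) := by
    apply isUnit_of_sub_one_mem_jac
    have : (1 - x ^ n) - 1 = -(x ^ n) := by noncomm_ring
    rw [this]
    exact Submodule.neg_mem _ hx
  obtain ⟨u, hu⟩ := hu
  set s : R := ∑ i ∈ Finset.range n, x ^ i with hs
  have h1 : (1 - x) * s = (u : R) := by
    rw [hu]
    have := mul_geom_sum x n
    have h' : (1 - x) * s = -((x - 1) * s) := by noncomm_ring
    rw [h', this]; noncomm_ring
  have h2 : s * (1 - x) = (u : R) := by
    rw [hu]
    have := geom_sum_mul x n
    have h' : s * (1 - x) = -(s * (x - 1)) := by noncomm_ring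
    rw [h', this]; noncomm_ring
  have hxs : Commute x s :=
    Commute.sum_right _ _ _ fun i _ => (Commute.refl x).pow_right i
  have hcs : Commute (u : R) s := by
    rw [hu]
    exact (Commute.one_left s).sub_left (hxs.pow_left n)
  have hinv : Commute ((↑u⁻¹ : R)) s := hcs.units_inv_left
  refine ⟨⟨1 - x, s * ↑u⁻¹, ?_, ?_⟩, rfl⟩
  · show (1 - x) * (s * ↑u⁻¹) = 1
    rw [← mul_assoc, h1, Units.mul_inv]
  · show (s * ↑u⁻¹) * (1 - x) = 1
    rw [← hinv.eq, mul_assoc, h2, Units.inv_mul]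

private lemma sub_mem_sqrtJ {R : Type*} [Ring R] {j z : R}
    (hj : j ∈ sqrtJ R) (hz : z ∈ Ideal.jacobson (⊥ : Ideal R))
    (hzc : ∀ y : R, Commute z y) : j - z ∈ sqrtJ R := by
  obtain ⟨n, hn, hjn⟩ := hj
  refine ⟨n, hn, ?_⟩
  have hcomm : Commute j (-z) := ((hzc j).symm).neg_right
  have : j - z = j + (-z) := by noncomm_ring
  rw [this, hcomm.add_pow]
  apply Ideal.sum_mem
  intro k hk
  rcases eq_or_lt_of_le (Finset.mem_range_succ_iff.mp hk) with heq | hlt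
  · subst heq
    simpa using hjn
  · have hm : 1 ≤ n - k := by omega
    have hzm : (-z) ^ (n - k) ∈ Ideal.jacobson (⊥ : Ideal R) := by
      have : (-z) ^ (n - k) = (-z) ^ (n - k - 1) * (-z) := by
        rw [← pow_succ]; congr 1; omega
      rw [this]
      exact Ideal.mul_mem_left _ _ (Submodule.neg_mem _ hz)
    have h1 : j ^ k * (-z) ^ (n - k) ∈ Ideal.jacobson (⊥ : Ideal R) :=
      Ideal.mul_mem_left _ _ hzm
    have : j ^ k * (-z) ^ (n - k) * (n.choose k : R)
        = (n.choose k : R) * (j ^ k * (-z) ^ (n - k)) := (Nat.cast_commute _ _).symm.eq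
    rw [this]
    exact Ideal.mul_mem_left _ _ h1

theorem stmt14 {R : Type*} [Ring R] :
    IsSqrtJU R ↔ IsWSqrtJU R ∧ (2 : R) ∈ Ideal.jacobson (⊥ : Ideal R) := by
  constructor
  · intro h
    refine ⟨fun u => (h u).imp fun j ⟨hj, he⟩ => ⟨hj, Or.inl he⟩, ?_⟩
    -- From the unit -1 we get -2 ∈ √J, hence (-2)^n ∈ J for some n ≥ 1.
    obtain ⟨j, ⟨n, hn, hjn⟩, hje⟩ := h (-1 : Rˣ)
    have hj2 : j = -2 := by
      have h' : (1 : R) + j = -1 := by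
        have : (-1 : R) = 1 + j := by simpa using hje
        exact this.symm
      have h'' : j + 1 = -1 := by rw [add_comm]; exact h'
      have := eq_sub_of_add_eq h''
      rw [this]; norm_num
    subst hj2
    rw [Ideal.mem_jacobson_iff]
    intro y
    -- 1 + 2y is a unit since (-2y)^n = y^n * (-2)^n ∈ J.
    have hpow : (-(2 * y)) ^ n ∈ Ideal.jacobson (⊥ : Ideal R) := by
      have hc : Commute (-2 : R) y := (Commute.neg_left (by
        have := (Nat.cast_commute 2 y : Commute ((2:ℕ):R) y)
        simpa using this))
      have : (-(2 * y)) ^ n = y ^ n * (-2 : R) ^ n := by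
        have h1 : (-(2 * y)) = (-2) * y := by noncomm_ring
        rw [h1, hc.mul_pow, (hc.pow_pow n n).eq]
      rw [this]
      exact Ideal.mul_mem_left _ _ hjn
    have hu : IsUnit (1 - (-(2 * y))) := isUnit_one_sub_of_pow_mem hn hpow
    obtain ⟨u, hue⟩ := hu
    refine ⟨(↑u⁻¹ : R), ?_⟩
    have h1 : (↑u⁻¹ : R) * (u : R) = 1 := Units.inv_mul u
    rw [hue] at h1
    have h2y : y * (2 : R) = 2 * y := by
      have := (Nat.cast_commute 2 y : Commute ((2:ℕ):R) y)
      simpa using this.symm.eq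
    have : (↑u⁻¹ : R) * y * 2 + ↑u⁻¹ - 1 = ↑u⁻¹ * (1 - (-(2 * y))) - 1 := by
      rw [mul_assoc, h2y]; noncomm_ring
    rw [this, h1, sub_self]
    exact Submodule.zero_mem _
  · rintro ⟨hw, h2⟩ u
    obtain ⟨j, hj, he | he⟩ := hw u
    · exact ⟨j, hj, he⟩
    · have h2c : ∀ y : R, Commute (2 : R) y := fun y => by
        have := (Nat.cast_commute 2 y : Commute ((2:ℕ):R) y)
        simpa using this
      refine ⟨j - 2, sub_mem_sqrtJ hj h2 h2c, ?_⟩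
      rw [he, show (2:R) = 1 + 1 from one_add_one_eq_two.symm]; abel
end

section
/- Let R be a division ring. Then R is a weakly √JU ring if and only if R is isomorphic to the field with 2 elements or the field with 3 elements. -/
lemma sqrtJ_div {R : Type*} [DivisionRing R] : sqrtJ R = {0} := by
  have hjac : Ideal.jacobson (⊥ : Ideal R) = ⊥ := by
    refine le_antisymm ?_ bot_le
    rw [Ideal.jacobson]
    exact sInf_le ⟨bot_le, Ideal.bot_isMaximal⟩
  ext x
  simp only [sqrtJ, Set.mem_setOf_eq, hjac, Ideal.mem_bot, Set.mem_singleton_iff]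
  constructor
  · rintro ⟨n, hn, h⟩
    exact pow_eq_zero_iff (by omega) |>.mp h
  · rintro rfl
    exact ⟨1, le_refl _, by simp⟩

lemma aux_equiv {R : Type*} [DivisionRing R]
    (key : ∀ x : R, x = 0 ∨ x = 1 ∨ x = -1) :
    (Nonempty (R ≃+* ZMod 2) ∨ Nonempty (R ≃+* ZMod 3)) := by
  by_cases h2 : (1 : R) = -1
  · left
    have h20 : (2 : R) = 0 := by
      have h := add_neg_cancel (1 : R)
      rw [← h2] at h
      rw [show (2 : R) = 1 + 1 by norm_num, h]
    have hchar : ringChar R = 2 := by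
      have hdvd : ringChar R ∣ 2 := (ringChar.spec R 2).mp (by exact_mod_cast h20)
      have hle := Nat.le_of_dvd (by norm_num) hdvd
      have hne1 : ringChar R ≠ 1 := CharP.ringChar_ne_one
      interval_cases h : ringChar R
      · simp at hdvd
      · exact absurd rfl hne1
      · rfl
    haveI : CharP R 2 := hchar ▸ ringChar.charP R
    haveI : Fact (Nat.Prime 2) := ⟨by norm_num⟩
    refine ⟨RingEquiv.symm <| RingEquiv.ofBijective (ZMod.castHom (dvd_refl 2) R) ⟨?_, ?_⟩⟩
    · exact (ZMod.castHom (dvd_refl 2) R).injective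
    · intro x
      rcases key x with rfl | rfl | rfl
      · exact ⟨0, by simp⟩
      · exact ⟨1, by simp⟩
      · exact ⟨-1, by rw [map_neg, map_one]⟩
  · right
    have h30 : (3 : R) = 0 := by
      rcases key (1 + 1) with h | h | h
      · exact absurd (eq_neg_of_add_eq_zero_left h) h2
      · have h1 : (1 : R) + 1 = 0 + 1 := by rw [h, zero_add]
        exact absurd (add_right_cancel h1) one_ne_zero
      · have : (3 : R) = (1 + 1) + 1 := by norm_num
        rw [this, h, neg_add_cancel]
    have hchar : ringChar R = 3 := by
      have hdvd : ringChar R ∣ 3 := (ringChar.spec R 3).mp (by exact_mod_cast h30)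
      have hle := Nat.le_of_dvd (by norm_num) hdvd
      have hne1 : ringChar R ≠ 1 := CharP.ringChar_ne_one
      interval_cases h : ringChar R
      · simp at hdvd
      · exact absurd rfl hne1
      · omega
      · rfl
    haveI : CharP R 3 := hchar ▸ ringChar.charP R
    haveI : Fact (Nat.Prime 3) := ⟨by norm_num⟩
    refine ⟨RingEquiv.symm <| RingEquiv.ofBijective (ZMod.castHom (dvd_refl 3) R) ⟨?_, ?_⟩⟩
    · exact (ZMod.castHom (dvd_refl 3) R).injective
    · intro x
      rcases key x with rfl | rfl | rfl
      · exact ⟨0, by simp⟩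
      · exact ⟨1, by simp⟩
      · exact ⟨-1, by rw [map_neg, map_one]⟩

lemma aux_back {R : Type*} [DivisionRing R] {n : ℕ} [NeZero n] (e : R ≃+* ZMod n)
    (hz : ∀ y : ZMod n, y ≠ 0 → y = 1 ∨ y = -1) : IsWSqrtJU R := by
  intro u
  refine ⟨0, by rw [sqrtJ_div]; rfl, ?_⟩
  simp only [add_zero]
  have hu : e u ≠ 0 := by
    simp [map_eq_zero_iff e e.injective]
  rcases hz (e u) hu with h | h
  · left; have := congrArg e.symm h; simpa using this
  · right; have := congrArg e.symm h; simpa using this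

theorem stmt15 {R : Type*} [DivisionRing R] :
    IsWSqrtJU R ↔ (Nonempty (R ≃+* ZMod 2) ∨ Nonempty (R ≃+* ZMod 3)) := by
  constructor
  · intro h
    apply aux_equiv
    intro x
    rcases eq_or_ne x 0 with hx | hx
    · exact Or.inl hx
    · obtain ⟨j, hj, hcase⟩ := h (Units.mk0 x hx)
      rw [sqrtJ_div] at hj
      rcases hj with rfl
      simp only [Units.val_mk0, add_zero] at hcase
      tauto
  · intro h
    rcases h with h | h
    · exact h.elim fun e => aux_back (n := 2) e (by decide)
    · exact h.elim fun e => aux_back (n := 3) e (by decide)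
end

section
/- Let R be an associative ring with identity and M an R-R-bimodule. The trivial extension T(R, M) is a weakly √JU ring if and only if R is a weakly √JU ring. -/
open TrivSqZeroExt

lemma ker_le_jac' {R M : Type*} [Ring R] [AddCommGroup M] [Module R M]
    [Module Rᵐᵒᵖ M] [SMulCommClass R Rᵐᵒᵖ M] (x : TrivSqZeroExt R M)
    (hx : x.fst = 0) : x ∈ Ideal.jacobson (⊥ : Ideal (TrivSqZeroExt R M)) := by
  rw [Ideal.mem_jacobson_iff]
  intro y
  refine ⟨1 - y * x, ?_⟩
  have hsq : (y * x) * (y * x) = 0 := by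
    ext <;> simp [hx]
  have h2 : (1 - y * x) * y * x + (1 - y * x) - 1 = 0 := by
    rw [mul_assoc, sub_mul, one_mul, hsq]
    abel
  simp [h2]

def fstRingHom {R M : Type*} [Ring R] [AddCommGroup M] [Module R M]
    [Module Rᵐᵒᵖ M] [SMulCommClass R Rᵐᵒᵖ M] : TrivSqZeroExt R M →+* R where
  toFun := fst
  map_one' := rfl
  map_mul' := fun _ _ => rfl
  map_zero' := rfl
  map_add' := fun _ _ => rfl

@[simp] lemma fstRingHom_apply {R M : Type*} [Ring R] [AddCommGroup M] [Module R M]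
    [Module Rᵐᵒᵖ M] [SMulCommClass R Rᵐᵒᵖ M] (x : TrivSqZeroExt R M) :
    fstRingHom (R := R) (M := M) x = x.fst := rfl

lemma jac_eq' {R M : Type*} [Ring R] [AddCommGroup M] [Module R M]
    [Module Rᵐᵒᵖ M] [SMulCommClass R Rᵐᵒᵖ M] :
    Ideal.jacobson (⊥ : Ideal (TrivSqZeroExt R M)) =
      Ideal.comap (fstRingHom (R := R) (M := M)) (Ideal.jacobson (⊥ : Ideal R)) := by
  have hsurj : Function.Surjective (fstRingHom (R := R) (M := M)) := fun r => ⟨inl r, by simp⟩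
  rw [Ideal.comap_jacobson_of_surjective hsurj]
  have hker : Ideal.comap (fstRingHom (R := R) (M := M)) (⊥ : Ideal R) ≤
      Ideal.jacobson (⊥ : Ideal (TrivSqZeroExt R M)) := by
    intro x hx
    exact ker_le_jac' x (by simpa [Ideal.mem_comap] using hx)
  refine le_antisymm (Ideal.jacobson_mono bot_le) ?_
  unfold Ideal.jacobson
  apply sInf_le_sInf
  rintro J ⟨-, hJmax⟩
  refine ⟨le_trans hker ?_, hJmax⟩
  exact sInf_le ⟨bot_le, hJmax⟩

lemma mem_jac_iff' {R M : Type*} [Ring R] [AddCommGroup M] [Module R M]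
    [Module Rᵐᵒᵖ M] [SMulCommClass R Rᵐᵒᵖ M] (x : TrivSqZeroExt R M) :
    x ∈ Ideal.jacobson (⊥ : Ideal (TrivSqZeroExt R M)) ↔
      x.fst ∈ Ideal.jacobson (⊥ : Ideal R) := by
  rw [jac_eq', Ideal.mem_comap, fstRingHom_apply]

lemma mem_sqrtJ_iff' {R M : Type*} [Ring R] [AddCommGroup M] [Module R M]
    [Module Rᵐᵒᵖ M] [SMulCommClass R Rᵐᵒᵖ M] (x : TrivSqZeroExt R M) :
    x ∈ sqrtJ (TrivSqZeroExt R M) ↔ x.fst ∈ sqrtJ R := by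
  unfold sqrtJ
  simp only [Set.mem_setOf_eq, mem_jac_iff', fst_pow]

theorem stmt17 {R M : Type*} [Ring R] [AddCommGroup M] [Module R M]
    [Module Rᵐᵒᵖ M] [SMulCommClass R Rᵐᵒᵖ M] :
    IsWSqrtJU (TrivSqZeroExt R M) ↔ IsWSqrtJU R := by
  constructor
  · intro h u
    obtain ⟨j, hj, hu⟩ := h (Units.map (inlHom R M).toMonoidHom u)
    refine ⟨j.fst, (mem_sqrtJ_iff' j).1 hj, ?_⟩
    rcases hu with hu | hu
    · left
      have := congrArg (fst (M := M)) hu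
      simpa using this
    · right
      have := congrArg (fst (M := M)) hu
      simpa using this
  · intro h u
    have hf : IsUnit ((u : TrivSqZeroExt R M).fst) :=
      isUnit_iff_isUnit_fst.mp u.isUnit
    obtain ⟨j, hj, hu⟩ := h hf.unit
    rw [IsUnit.unit_spec] at hu
    rcases hu with hu | hu
    · refine ⟨(u : TrivSqZeroExt R M) - 1, ?_, Or.inl (by abel)⟩
      rw [mem_sqrtJ_iff']
      simpa [hu] using hj
    · refine ⟨(u : TrivSqZeroExt R M) + 1, ?_, Or.inr (by abel)⟩
      rw [mem_sqrtJ_iff']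
      simpa [hu] using hj
end

section
/- Let R be an associative ring with identity. The formal power series ring R[[x]] is a weakly √JU ring if and only if R is a weakly √JU ring. -/
/-! The constant-coefficient map `R⟦X⟧ → R` is surjective and its kernel `(X)` lies in the
Jacobson radical, since `1 + y * g` is invertible whenever `g(0) = 0`. Along a surjection whose
kernel lies in the Jacobson radical, an element is in `J` (hence in `√J`) exactly when its image
is, and units lift because `1 + J` consists of units; so `u ∓ 1 ∈ √J` transfers both ways. -/

theorem isUnit_one_add_of_mem_jacobson_bot {R : Type*} [Ring R] {j : R}
    (hj : j ∈ Ideal.jacobson (⊥ : Ideal R)) : IsUnit (1 + j) := by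
  have has_left_inv : ∀ x ∈ Ideal.jacobson (⊥ : Ideal R), ∃ z, z * (1 + x) = 1 := fun x hx ↦ by
    obtain ⟨z, hz⟩ := Ideal.exists_mul_add_sub_mem_of_mem_jacobson x hx
    exact ⟨z, by rwa [Ideal.mem_bot, sub_eq_zero, add_comm] at hz⟩
  obtain ⟨z, hz⟩ := has_left_inv j hj
  -- `J` is a left ideal, so `z = 1 - z * j` has a left inverse too; hence `z⁻¹ = 1 + j`.
  have hz' : z = 1 + -(z * j) := by
    rw [← hz]; noncomm_ring
  obtain ⟨w, hw⟩ := has_left_inv _ (neg_mem (Ideal.mul_mem_left _ z hj))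
  rw [← hz', left_inv_eq_right_inv hw hz] at hw
  exact isUnit_iff_exists.mpr ⟨z, hw, hz⟩

theorem isUnit_of_isUnit_mul_of_isUnit_mul {M : Type*} [Monoid M] {r s : M}
    (hrs : IsUnit (r * s)) (hsr : IsUnit (s * r)) : IsUnit r := by
  obtain ⟨a, ha⟩ := hrs
  obtain ⟨b, hb⟩ := hsr
  refine isUnit_iff_exists_and_exists.mpr ⟨⟨s * ↑a⁻¹, ?_⟩, ⟨↑b⁻¹ * s, ?_⟩⟩
  · rw [← mul_assoc, ← ha, a.mul_inv]
  · rw [mul_assoc, ← hb, b.inv_mul]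

theorem exists_units_map_eq_of_ker_le_jacobson {R S : Type*} [Ring R] [Ring S] {f : R →+* S}
    (hf : Function.Surjective f) (hker : RingHom.ker f ≤ Ideal.jacobson ⊥) (u : Sˣ) :
    ∃ v : Rˣ, Units.map (f : R →* S) v = u := by
  obtain ⟨r, hr⟩ := hf u
  obtain ⟨s, hs⟩ := hf ↑u⁻¹
  have isUnit_of_map_eq_one : ∀ x : R, f x = 1 → IsUnit x := fun x hx ↦ by
    simpa using isUnit_one_add_of_mem_jacobson_bot (hker (show x - 1 ∈ RingHom.ker f by
      rw [RingHom.mem_ker, map_sub, hx, map_one, sub_self]))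
  have hrs : IsUnit (r * s) := isUnit_of_map_eq_one _ (by rw [map_mul, hr, hs, u.mul_inv])
  have hsr : IsUnit (s * r) := isUnit_of_map_eq_one _ (by rw [map_mul, hr, hs, u.inv_mul])
  exact ⟨(isUnit_of_isUnit_mul_of_isUnit_mul hrs hsr).unit, Units.ext hr⟩

theorem map_mem_jacobson_bot_iff_of_ker_le {R S : Type*} [Ring R] [Ring S] {f : R →+* S}
    (hf : Function.Surjective f) (hker : RingHom.ker f ≤ Ideal.jacobson ⊥) {x : R} :
    f x ∈ Ideal.jacobson (⊥ : Ideal S) ↔ x ∈ Ideal.jacobson (⊥ : Ideal R) := by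
  have hjac : (RingHom.ker f).jacobson = Ideal.jacobson ⊥ :=
    le_antisymm (Ideal.jacobson_idem (I := (⊥ : Ideal R)) ▸ Ideal.jacobson_mono hker)
      (Ideal.jacobson_mono bot_le)
  rw [← Ideal.mem_comap, Ideal.comap_jacobson_of_surjective hf, ← RingHom.ker_eq_comap_bot, hjac]

theorem map_mem_sqrtJ_iff_of_ker_le {R S : Type*} [Ring R] [Ring S] {f : R →+* S}
    (hf : Function.Surjective f) (hker : RingHom.ker f ≤ Ideal.jacobson ⊥) {x : R} :
    f x ∈ sqrtJ S ↔ x ∈ sqrtJ R := by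
  simp only [sqrtJ, Set.mem_ofPred_eq, ← map_pow, map_mem_jacobson_bot_iff_of_ker_le hf hker]

theorem isWSqrtJU_iff_forall_units {R : Type*} [Ring R] :
    IsWSqrtJU R ↔ ∀ u : Rˣ, (u : R) - 1 ∈ sqrtJ R ∨ (u : R) + 1 ∈ sqrtJ R := by
  refine forall_congr' fun u ↦ ⟨?_, ?_⟩
  · rintro ⟨j, hj, hu | hu⟩
    · exact Or.inl (by rwa [hu, add_sub_cancel_left])
    · exact Or.inr (by rwa [hu, neg_add_cancel_comm])
  · rintro (h | h)
    · exact ⟨_, h, Or.inl (by abel)⟩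
    · exact ⟨_, h, Or.inr (by abel)⟩

theorem isWSqrtJU_iff_of_surjective_of_ker_le {R S : Type*} [Ring R] [Ring S] {f : R →+* S}
    (hf : Function.Surjective f) (hker : RingHom.ker f ≤ Ideal.jacobson ⊥) :
    IsWSqrtJU R ↔ IsWSqrtJU S := by
  have key : ∀ v : Rˣ, (f v - 1 ∈ sqrtJ S ∨ f v + 1 ∈ sqrtJ S) ↔
      ((v : R) - 1 ∈ sqrtJ R ∨ (v : R) + 1 ∈ sqrtJ R) := fun v ↦ by
    rw [← map_mem_sqrtJ_iff_of_ker_le hf hker, ← map_mem_sqrtJ_iff_of_ker_le hf hker (x := v + 1),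
      map_sub, map_add, map_one]
  simp only [isWSqrtJU_iff_forall_units]
  refine ⟨fun h u ↦ ?_, fun h v ↦ (key v).mp (h (Units.map (f : R →* S) v))⟩
  obtain ⟨v, rfl⟩ := exists_units_map_eq_of_ker_le_jacobson hf hker u
  exact (key v).mpr (h v)

theorem PowerSeries.ker_constantCoeff_le_jacobson {R : Type*} [Ring R] :
    RingHom.ker (PowerSeries.constantCoeff (R := R)) ≤ Ideal.jacobson ⊥ := by
  refine fun g hg ↦ Ideal.mem_jacobson_iff.mpr fun y ↦ ?_
  obtain ⟨u, hu⟩ : IsUnit (y * g + 1) := by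
    simp [PowerSeries.isUnit_iff_constantCoeff, RingHom.mem_ker.mp hg]
  refine ⟨↑u⁻¹, ?_⟩
  rw [Ideal.mem_bot, sub_eq_zero, mul_assoc, ← mul_add_one, ← hu, u.inv_mul]

theorem stmt18 {R : Type*} [Ring R] :
    IsWSqrtJU (PowerSeries R) ↔ IsWSqrtJU R :=
  isWSqrtJU_iff_of_surjective_of_ker_le
    (fun r ↦ ⟨PowerSeries.C r, PowerSeries.constantCoeff_C r⟩)
    PowerSeries.ker_constantCoeff_le_jacobson
end

section
/- Let R be an associative ring with identity and G a group. If the group ring RG is a weakly √JU ring, then R is a weakly √JU ring. -/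
theorem sqrtJ_map_surjective {A B : Type*} [Ring A] [Ring B] (f : A →+* B)
    (hf : Function.Surjective f) {x : A} (hx : x ∈ Ideal.jacobson (⊥ : Ideal A)) :
    f x ∈ Ideal.jacobson (⊥ : Ideal B) := by
  rw [Ideal.jacobson, Ideal.mem_sInf] at hx ⊢
  rintro N ⟨-, hN⟩
  have : x ∈ Ideal.comap f N := hx ⟨bot_le, Ideal.comap_isMaximal_of_surjective f hf⟩
  exact this

theorem stmt19 {R : Type*} {G : Type*} [Ring R] [Group G]
    (h : IsWSqrtJU (MonoidAlgebra R G)) : IsWSqrtJU R := by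
  classical
  set ι : R →+* MonoidAlgebra R G := MonoidAlgebra.singleOneRingHom with hι
  set ε : MonoidAlgebra R G →+* R :=
    MonoidAlgebra.liftNCRingHom (RingHom.id R) (1 : G →* R) (fun x y => by simp [Commute.one_right])
  have hε : ∀ r : R, ε (ι r) = r := by
    intro r
    simp [ε, MonoidAlgebra.liftNCRingHom, MonoidAlgebra.singleOneRingHom, hι]
  have hsurj : Function.Surjective ε := fun r => ⟨ι r, hε r⟩
  intro u
  obtain ⟨j, ⟨n, hn, hjn⟩, hu⟩ :=
    h (Units.map (ι.toMonoidHom) u)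
  refine ⟨ε j, ⟨n, hn, ?_⟩, ?_⟩
  · rw [← map_pow]
    exact sqrtJ_map_surjective ε hsurj hjn
  · have : ε ((Units.map (ι.toMonoidHom) u : MonoidAlgebra R G)) = u := by
      simp [hε]
    rcases hu with hu | hu
    · left; rw [← this, hu]; simp
    · right; rw [← this, hu]; simp
end
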